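/- If Z0 and Z1 are cyclic flats of M⁺ with Z0 − e = Z1 − e, then Z0 = Z1. -/

import Mathlib

/-! A cyclic set `Z` lies in the closure of `Z - e`, since `e` is spanned by the rest of a circuit
through it. Hence each of `Z0`, `Z1` lies in the closure of `Z0 - e = Z1 - e`, which is contained
in the other flat. -/

open Set Matroid
open scoped Classical

namespace Paper

variable {α : Type*}

/-- A circuit of a matroid: a minimal dependent set. -/
def Circuit (M : Matroid α) (C : Set α) : Prop :=
  M.Dep C ∧ ∀ D ⊂ C, M.Indep D

/-- A coloop: an element of the ground set lying in no circuit. -/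
def Coloop (M : Matroid α) (x : α) : Prop :=
  x ∈ M.E ∧ ∀ C, Circuit M C → x ∉ C

/-- The set of coloops of a matroid. -/
def coloops (M : Matroid α) : Set α := {x | Coloop M x}

/-- A cyclic set: a subset of the ground set each of whose elements lies in a
circuit contained in the set (equivalently, the restriction has no coloops). -/
def Cyclic (M : Matroid α) (X : Set α) : Prop :=
  X ⊆ M.E ∧ ∀ x ∈ X, ∃ C, Circuit M C ∧ C ⊆ X ∧ x ∈ C

/-- A cyclic flat: a cyclic set that is also a flat. -/
def CyclicFlat (M : Matroid α) (X : Set α) : Prop :=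
  Cyclic M X ∧ M.IsFlat X

/-- The rank of a set: the largest cardinality of an independent subset. -/
noncomputable def rk (M : Matroid α) (X : Set α) : ℕ :=
  sSup (Set.ncard '' {I | M.Indep I ∧ I ⊆ X})

/-- The nullity of a set: `n(X) = |X| − r(X)`. -/
noncomputable def nullity (M : Matroid α) (X : Set α) : ℤ :=
  (X.ncard : ℤ) - rk M X

/-- Deletion of a single element: `M \ e`. -/
noncomputable def deleteElem (M : Matroid α) (e : α) : Matroid α :=
  M ↾ (M.E \ {e})

lemma circuit_iff_isCircuit {M : Matroid α} {C : Set α} : Circuit M C ↔ M.IsCircuit C :=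
  (isCircuit_iff_forall_ssubset).symm

lemma Cyclic.subset_closure_diff_singleton {M : Matroid α} {Z : Set α} (hZ : Cyclic M Z)
    (e : α) : Z ⊆ M.closure (Z \ {e}) := by
  intro x hx
  obtain rfl | hxe := eq_or_ne x e
  · obtain ⟨C, hC, hCZ, hxC⟩ := hZ.2 x hx
    exact M.closure_subset_closure (sdiff_subset_sdiff_left hCZ)
      ((circuit_iff_isCircuit.1 hC).mem_closure_sdiff_singleton_of_mem hxC)
  · exact M.subset_closure _ (sdiff_subset.trans hZ.1) ⟨hx, hxe⟩

lemma Cyclic.subset_of_diff_singleton_subset {M : Matroid α} {Z F : Set α} {e : α}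
    (hZ : Cyclic M Z) (hF : M.IsFlat F) (hZF : Z \ {e} ⊆ F) : Z ⊆ F :=
  (hZ.subset_closure_diff_singleton e).trans
    ((M.closure_subset_closure hZF).trans hF.closure.subset)

theorem statement_6_general (M : Matroid α) (e : α)
    (Z0 Z1 : Set α) (h0 : CyclicFlat M Z0) (h1 : CyclicFlat M Z1)
    (h : Z0 \ {e} = Z1 \ {e}) : Z0 = Z1 :=
  (h0.1.subset_of_diff_singleton_subset h1.2 (h.trans_subset sdiff_subset)).antisymm
    (h1.1.subset_of_diff_singleton_subset h0.2 (h.symm.trans_subset sdiff_subset))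

theorem statement_6 (M : Matroid α) (hfin : M.E.Finite) (e : α) (he : e ∈ M.E)
    (Z0 Z1 : Set α) (h0 : CyclicFlat M Z0) (h1 : CyclicFlat M Z1)
    (h : Z0 \ {e} = Z1 \ {e}) : Z0 = Z1 :=
  statement_6_general M e Z0 Z1 h0 h1 h

end Paper
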